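/- In the setting of the decomposition A = A₁A₂ of a finite dimensional Hopf algebra, let B := A^{*cop} (the dual Hopf algebra with opposite coproduct), B₁ := (A₁^ε A₂)^⊥ ⊆ B, B₂ := (A₁ A₂^ε)^⊥ ⊆ B. Then B₁ and B₂ are subalgebras of B; B₁ is a left coideal of B and B₂ is a right coideal of B; and the multiplication map B₂ ⊗ B₁ → B is a linear isomorphism. -/

import Mathlib

open TensorProduct

noncomputable section

/-- The tensor product of two submodules, as a submodule of the tensor product. -/
def sTen (k : Type*) [CommSemiring k] {A B : Type*} [AddCommMonoid A] [AddCommMonoid B]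
    [Module k A] [Module k B] (p : Submodule k A) (q : Submodule k B) :
    Submodule k (A ⊗[k] B) :=
  LinearMap.range (TensorProduct.map p.subtype q.subtype)

/-- The convolution product on the linear dual of a coalgebra,
`(b * b')(a) = (b ⊗ b')(Δ a)`; this is the multiplication of `B = A^{*cop}`. -/
def convMul (k A : Type*) [Field k] [Ring A] [HopfAlgebra k A]
    (b b' : Module.Dual k A) : Module.Dual k A :=
  (Coalgebra.comul (R := k)).dualMap (TensorProduct.dualDistrib k A A (b ⊗ₜ[k] b'))

open Module

section helpers
variable {k : Type*} [Field k] {M N : Type*} [AddCommGroup M] [AddCommGroup N]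
  [Module k M] [Module k N]

lemma sTen_eq_span (p : Submodule k M) (q : Submodule k N) :
    sTen k p q = Submodule.span k {x | ∃ a ∈ p, ∃ b ∈ q, a ⊗ₜ[k] b = x} := by
  apply le_antisymm
  · rintro x ⟨y, rfl⟩
    induction y using TensorProduct.induction_on with
    | zero => rw [map_zero]; exact Submodule.zero_mem _
    | tmul a b => exact Submodule.subset_span ⟨a, a.2, b, b.2, by simp⟩
    | add x y hx hy => rw [map_add]; exact add_mem hx hy
  · rw [Submodule.span_le]; rintro _ ⟨a, ha, b, hb, rfl⟩
    exact ⟨⟨a, ha⟩ ⊗ₜ ⟨b, hb⟩, rfl⟩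

lemma tmul_mem_sTen {p : Submodule k M} {q : Submodule k N} {a b} (ha : a ∈ p) (hb : b ∈ q) :
    a ⊗ₜ[k] b ∈ sTen k p q := ⟨⟨a, ha⟩ ⊗ₜ ⟨b, hb⟩, rfl⟩

lemma sTen_mono {p p' : Submodule k M} {q q' : Submodule k N} (hp : p ≤ p') (hq : q ≤ q') :
    sTen k p q ≤ sTen k p' q' := by
  rw [sTen_eq_span, sTen_eq_span]
  apply Submodule.span_mono
  rintro _ ⟨a, ha, b, hb, rfl⟩
  exact ⟨a, hp ha, b, hq hb, rfl⟩

lemma sTen_sup_right (r : Submodule k M) (p q : Submodule k N) :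
    sTen k r (p ⊔ q) ≤ sTen k r p ⊔ sTen k r q := by
  rw [sTen_eq_span, Submodule.span_le]
  rintro _ ⟨a, ha, b, hb, rfl⟩
  obtain ⟨b₁, h₁, b₂, h₂, rfl⟩ := Submodule.mem_sup.mp hb
  rw [tmul_add]
  exact add_mem (Submodule.mem_sup_left (tmul_mem_sTen ha h₁))
    (Submodule.mem_sup_right (tmul_mem_sTen ha h₂))

lemma sTen_sup_left (p q : Submodule k M) (r : Submodule k N) :
    sTen k (p ⊔ q) r ≤ sTen k p r ⊔ sTen k q r := by
  rw [sTen_eq_span, Submodule.span_le]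
  rintro _ ⟨a, ha, b, hb, rfl⟩
  obtain ⟨a₁, h₁, a₂, h₂, rfl⟩ := Submodule.mem_sup.mp ha
  rw [add_tmul]
  exact add_mem (Submodule.mem_sup_left (tmul_mem_sTen h₁ hb))
    (Submodule.mem_sup_right (tmul_mem_sTen h₂ hb))

lemma sTen_vanish {P₀ : Type*} [AddCommGroup P₀] [Module k P₀] {p : Submodule k M}
    {q : Submodule k N} {F : M ⊗[k] N →ₗ[k] P₀}
    (h : ∀ a ∈ p, ∀ b ∈ q, F (a ⊗ₜ[k] b) = 0) : ∀ x ∈ sTen k p q, F x = 0 := by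
  intro x hx
  rw [sTen_eq_span] at hx
  induction hx using Submodule.span_induction with
  | mem x hx => obtain ⟨a, ha, b, hb, rfl⟩ := hx; exact h a ha b hb
  | zero => exact map_zero F
  | add x y _ _ hx hy => rw [map_add, hx, hy, add_zero]
  | smul c x _ hx => rw [map_smul, hx, smul_zero]

lemma sTen_top_top : sTen k (⊤ : Submodule k M) (⊤ : Submodule k N) = ⊤ := by
  refine le_antisymm le_top ?_
  rw [sTen_eq_span, ← TensorProduct.span_tmul_eq_top k M N]
  apply Submodule.span_mono
  rintro _ ⟨m, n, rfl⟩
  exact ⟨m, trivial, n, trivial, rfl⟩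

lemma tmap_inj {P Q : Type*} [AddCommGroup P] [AddCommGroup Q] [Module k P] [Module k Q]
    {f : M →ₗ[k] P} {g : N →ₗ[k] Q} (hf : Function.Injective f) (hg : Function.Injective g) :
    Function.Injective (TensorProduct.map f g) := by
  have he : TensorProduct.map f g = (f.rTensor Q) ∘ₗ (g.lTensor M) :=
    TensorProduct.ext' fun m n => rfl
  rw [he]
  exact (Module.Flat.rTensor_preserves_injective_linearMap f hf).comp
    (Module.Flat.lTensor_preserves_injective_linearMap g hg)

lemma finrank_sTen [FiniteDimensional k M] [FiniteDimensional k N]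
    (p : Submodule k M) (q : Submodule k N) :
    finrank k (sTen k p q) = finrank k p * finrank k q := by
  rw [sTen, LinearMap.finrank_range_of_inj
    (tmap_inj p.injective_subtype q.injective_subtype), finrank_tensorProduct]

lemma mem_sTen_span_right {r : Submodule k M} {c : N} {x}
    (hx : x ∈ sTen k r (Submodule.span k {c})) : ∃ z, x = z ⊗ₜ[k] c := by
  rw [sTen_eq_span] at hx
  induction hx using Submodule.span_induction with
  | mem x hx =>
    obtain ⟨a, _, b, hb, rfl⟩ := hx
    obtain ⟨t, rfl⟩ := Submodule.mem_span_singleton.mp hb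
    exact ⟨t • a, by rw [tmul_smul, smul_tmul']⟩
  | zero => exact ⟨0, (TensorProduct.zero_tmul M c).symm⟩
  | add x y _ _ hx hy =>
    obtain ⟨z, rfl⟩ := hx; obtain ⟨z', rfl⟩ := hy
    exact ⟨z + z', (TensorProduct.add_tmul z z' c).symm⟩
  | smul t x _ hx =>
    obtain ⟨z, rfl⟩ := hx
    exact ⟨t • z, (smul_tmul' t z c).symm⟩

lemma mem_sTen_span_left {r : Submodule k N} {c : M} {x}
    (hx : x ∈ sTen k (Submodule.span k {c}) r) : ∃ z, x = c ⊗ₜ[k] z := by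
  rw [sTen_eq_span] at hx
  induction hx using Submodule.span_induction with
  | mem x hx =>
    obtain ⟨a, ha, b, _, rfl⟩ := hx
    obtain ⟨t, rfl⟩ := Submodule.mem_span_singleton.mp ha
    exact ⟨t • b, by rw [tmul_smul, smul_tmul', smul_tmul]⟩
  | zero => exact ⟨0, (TensorProduct.tmul_zero N c).symm⟩
  | add x y _ _ hx hy =>
    obtain ⟨z, rfl⟩ := hx; obtain ⟨z', rfl⟩ := hy
    exact ⟨z + z', (TensorProduct.tmul_add c z z').symm⟩
  | smul t x _ hx =>
    obtain ⟨z, rfl⟩ := hx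
    exact ⟨t • z, (tmul_smul t c z).symm⟩

lemma dualDistrib_inj [FiniteDimensional k M] [FiniteDimensional k N] :
    Function.Injective (TensorProduct.dualDistrib k M N) := by
  have h := TensorProduct.dualDistrib_dualDistribInvOfBasis_right_inverse (R := k)
    (Module.finBasis k M) (Module.finBasis k N)
  intro x y hxy
  have hx := DFunLike.congr_fun h x
  have hy := DFunLike.congr_fun h y
  simp only [LinearMap.coe_comp, Function.comp_apply, LinearMap.id_coe, id_eq] at hx hy
  rw [← hx, ← hy, hxy]

lemma bij_of_inj_rank {W : Type*} [AddCommGroup W] [Module k W] [FiniteDimensional k M]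
    [FiniteDimensional k N] [FiniteDimensional k W]
    (g : M ⊗[k] N →ₗ[k] W) (h0 : ∀ t, g t = 0 → t = 0)
    (hrank : finrank k M * finrank k N = finrank k W) : Function.Bijective g := by
  have hinj : Function.Injective g := (injective_iff_map_eq_zero g).mpr h0
  have hfr : finrank k (M ⊗[k] N) = finrank k W := by rw [finrank_tensorProduct, hrank]
  exact ⟨hinj, (LinearMap.injective_iff_surjective_of_finrank_eq_finrank hfr).mp hinj⟩

lemma finrank_map_of_inj {f : M →ₗ[k] N} (hf : Function.Injective f) (p : Submodule k M) :
    finrank k (p.map f) = finrank k p :=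
  (Submodule.equivMapOfInjective f hf p).finrank_eq.symm

lemma finrank_dualAnnihilator_add [FiniteDimensional k M] (p : Submodule k M) :
    finrank k p.dualAnnihilator + finrank k p = finrank k M := by
  rw [← (Subspace.quotEquivAnnihilator p).finrank_eq]
  exact Submodule.finrank_quotient_add_finrank p

variable {A : Type*} [Ring A] [Algebra k A]

lemma sTen_mul (p₁ q₁ p₂ q₂ : Submodule k A) :
    sTen k p₁ q₁ * sTen k p₂ q₂ ≤ sTen k (p₁ * p₂) (q₁ * q₂) := by
  rw [sTen_eq_span p₁ q₁, sTen_eq_span p₂ q₂, Submodule.span_mul_span, sTen_eq_span,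
    Submodule.span_le]
  rintro _ ⟨_, ⟨a, ha, b, hb, rfl⟩, _, ⟨c, hc, d, hd, rfl⟩, rfl⟩
  exact Submodule.subset_span ⟨a * c, Submodule.mul_mem_mul ha hc, b * d,
    Submodule.mul_mem_mul hb hd, by simp [Algebra.TensorProduct.tmul_mul_tmul]⟩

lemma mul_eq_mulRange (p q : Submodule k A) :
    p * q = LinearMap.range ((LinearMap.mul' k A).comp (TensorProduct.map p.subtype q.subtype)) := by
  apply le_antisymm
  · apply Submodule.mul_le.mpr
    intro x hx y hy
    exact ⟨⟨x, hx⟩ ⊗ₜ ⟨y, hy⟩, by simp [LinearMap.mul'_apply]⟩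
  · rintro _ ⟨t, rfl⟩
    induction t using TensorProduct.induction_on with
    | zero => rw [map_zero]; exact Submodule.zero_mem _
    | tmul a b => simpa [LinearMap.mul'_apply] using Submodule.mul_mem_mul a.2 b.2
    | add x y hx hy => rw [map_add]; exact add_mem hx hy

end helpers

set_option maxHeartbeats 2000000 in
set_option synthInstance.maxHeartbeats 1000000 in
/-- for a finite dimensional Hopf algebra `A` with decomposition
`A = A₁A₂` (`A₁` a left coideal subalgebra, `A₂` a right coideal subalgebra),
set `B = A^{*cop}`, `B₁ = (A₁^ε A₂)^⊥`, `B₂ = (A₁ A₂^ε)^⊥`.  Then `B₁, B₂` are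
subalgebras of `B`, `B₁` is a left coideal and `B₂` a right coideal of `B`
(the coproduct of `B` is `b ↦ b ∘ m^{op}`, viewed inside `Dual(A ⊗ A)`), and
multiplication `B₂ ⊗ B₁ → B` is a linear isomorphism. -/
theorem stmt3 (k A : Type*) [Field k] [Ring A] [HopfAlgebra k A] [FiniteDimensional k A]
    (A₁ A₂ : Subalgebra k A)
    (hiso : Function.Bijective
      ((LinearMap.mul' k A).comp
        (TensorProduct.map (Subalgebra.toSubmodule A₁).subtype
          (Subalgebra.toSubmodule A₂).subtype)))
    (hA₁ : ∀ x ∈ A₁, Coalgebra.comul (R := k) x ∈ sTen k ⊤ (Subalgebra.toSubmodule A₁))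
    (hA₂ : ∀ x ∈ A₂, Coalgebra.comul (R := k) x ∈ sTen k (Subalgebra.toSubmodule A₂) ⊤)
    (B₁ B₂ : Submodule k (Module.Dual k A))
    (hB₁ : B₁ = Submodule.dualAnnihilator
      ((Subalgebra.toSubmodule A₁ ⊓
          LinearMap.ker (Coalgebra.counit (R := k) (A := A))) *
        Subalgebra.toSubmodule A₂))
    (hB₂ : B₂ = Submodule.dualAnnihilator
      (Subalgebra.toSubmodule A₁ *
        (Subalgebra.toSubmodule A₂ ⊓
          LinearMap.ker (Coalgebra.counit (R := k) (A := A))))) :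
    -- B₁ and B₂ are subalgebras of B = A^{*cop}
    ((Coalgebra.counit (R := k) (A := A) ∈ B₁ ∧
        ∀ b ∈ B₁, ∀ b' ∈ B₁, convMul k A b b' ∈ B₁) ∧
      (Coalgebra.counit (R := k) (A := A) ∈ B₂ ∧
        ∀ b ∈ B₂, ∀ b' ∈ B₂, convMul k A b b' ∈ B₂)) ∧
    -- B₁ is a left coideal of B: Δ_B(b) ∈ B ⊗ B₁, where
    -- Δ_B(b) = b ∘ m ∘ τ ∈ Dual(A ⊗ A)  (opposite coproduct, as B = A^{*cop})
    (∀ b ∈ B₁,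
      b.comp ((LinearMap.mul' k A).comp (TensorProduct.comm k A A).toLinearMap) ∈
        Submodule.map (TensorProduct.dualDistrib k A A) (sTen k ⊤ B₁)) ∧
    -- B₂ is a right coideal of B
    (∀ b ∈ B₂,
      b.comp ((LinearMap.mul' k A).comp (TensorProduct.comm k A A).toLinearMap) ∈
        Submodule.map (TensorProduct.dualDistrib k A A) (sTen k B₂ ⊤)) ∧
    -- multiplication B₂ ⊗ B₁ → B is a linear isomorphism
    Function.Bijective
      (((Coalgebra.comul (R := k) (A := A)).dualMap.comp
          (TensorProduct.dualDistrib k A A)).comp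
        (TensorProduct.map B₂.subtype B₁.subtype)) := by
  classical
  set M₁ := Subalgebra.toSubmodule A₁ with hM₁def
  set M₂ := Subalgebra.toSubmodule A₂ with hM₂def
  set E := LinearMap.ker (Coalgebra.counit (R := k) (A := A)) with hEdef
  set P₁ := M₁ ⊓ E with hP₁def
  set P₂ := M₂ ⊓ E with hP₂def
  set W₁ := P₁ * M₂ with hW₁def
  set W₂ := M₁ * P₂ with hW₂def
  have hE : ∀ z : A, z ∈ E ↔ Coalgebra.counit (R := k) z = 0 := fun z => LinearMap.mem_ker
  have h1M₁ : (1 : A) ∈ M₁ := A₁.one_mem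
  have h1M₂ : (1 : A) ∈ M₂ := A₂.one_mem
  have htop : M₁ * M₂ = ⊤ := by
    rw [mul_eq_mulRange]; exact LinearMap.range_eq_top.mpr hiso.2
  have hP₁M₁ : P₁ * M₁ ≤ P₁ := by
    apply Submodule.mul_le.mpr
    intro x hx y hy
    refine ⟨A₁.mul_mem hx.1 hy, ?_⟩
    exact (hE _).mpr (by rw [Bialgebra.counit_mul, (hE x).mp hx.2, zero_mul])
  have hM₂P₂ : M₂ * P₂ ≤ P₂ := by
    apply Submodule.mul_le.mpr
    intro x hx y hy
    refine ⟨A₂.mul_mem hx hy.1, ?_⟩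
    exact (hE _).mpr (by rw [Bialgebra.counit_mul, (hE y).mp hy.2, mul_zero])
  have hP₁top : P₁ * ⊤ ≤ W₁ := by
    calc P₁ * ⊤ = P₁ * (M₁ * M₂) := by rw [htop]
      _ = P₁ * M₁ * M₂ := (mul_assoc _ _ _).symm
      _ ≤ P₁ * M₂ := mul_le_mul' hP₁M₁ le_rfl
  have htopP₂ : ⊤ * P₂ ≤ W₂ := by
    calc (⊤ : Submodule k A) * P₂ = M₁ * M₂ * P₂ := by rw [htop]
      _ = M₁ * (M₂ * P₂) := mul_assoc _ _ _
      _ ≤ M₁ * P₂ := mul_le_mul' le_rfl hM₂P₂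
  have hW₁r : W₁ * ⊤ ≤ W₁ := by
    calc W₁ * ⊤ = P₁ * (M₂ * ⊤) := mul_assoc _ _ _
      _ ≤ P₁ * ⊤ := mul_le_mul' le_rfl le_top
      _ ≤ W₁ := hP₁top
  have hW₂l : ⊤ * W₂ ≤ W₂ := by
    calc (⊤ : Submodule k A) * W₂ = (⊤ * M₁) * P₂ := (mul_assoc _ _ _).symm
      _ ≤ ⊤ * P₂ := mul_le_mul' le_top le_rfl
      _ ≤ W₂ := htopP₂
  have honeM₂ : Submodule.span k {(1 : A)} * M₂ = M₂ := by
    rw [← Submodule.one_eq_span, one_mul]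
  have hM₁one : M₁ * Submodule.span k {(1 : A)} = M₁ := by
    rw [← Submodule.one_eq_span, mul_one]
  have hM₁split : M₁ ≤ Submodule.span k {(1 : A)} ⊔ P₁ := by
    intro y hy
    have h1 : y - (Coalgebra.counit (R := k) y) • 1 ∈ P₁ := by
      refine ⟨sub_mem hy (Submodule.smul_mem _ _ h1M₁), ?_⟩
      exact (hE _).mpr (by rw [map_sub, map_smul, Bialgebra.counit_one, smul_eq_mul, mul_one,
        sub_self])
    have h2 : y = (Coalgebra.counit (R := k) y) • 1 + (y - (Coalgebra.counit (R := k) y) • 1) := by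
      abel
    rw [h2]
    exact add_mem (Submodule.mem_sup_left (Submodule.smul_mem _ _
      (Submodule.mem_span_singleton_self _))) (Submodule.mem_sup_right h1)
  have hM₂split : M₂ ≤ Submodule.span k {(1 : A)} ⊔ P₂ := by
    intro y hy
    have h1 : y - (Coalgebra.counit (R := k) y) • 1 ∈ P₂ := by
      refine ⟨sub_mem hy (Submodule.smul_mem _ _ h1M₂), ?_⟩
      exact (hE _).mpr (by rw [map_sub, map_smul, Bialgebra.counit_one, smul_eq_mul, mul_one,
        sub_self])
    have h2 : y = (Coalgebra.counit (R := k) y) • 1 + (y - (Coalgebra.counit (R := k) y) • 1) := by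
      abel
    rw [h2]
    exact add_mem (Submodule.mem_sup_left (Submodule.smul_mem _ _
      (Submodule.mem_span_singleton_self _))) (Submodule.mem_sup_right h1)
  -- decomposition of comul on M₁ and M₂
  have hdec₁ : ∀ y ∈ M₁, Coalgebra.comul (R := k) y - y ⊗ₜ[k] (1 : A) ∈ sTen k ⊤ P₁ := by
    intro y hy
    have h2 : Coalgebra.comul (R := k) y ∈
        sTen k ⊤ (Submodule.span k {(1 : A)}) ⊔ sTen k ⊤ P₁ :=
      sTen_sup_right _ _ _ (sTen_mono le_rfl hM₁split (hA₁ y hy))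
    obtain ⟨u, hu, v, hv, huv⟩ := Submodule.mem_sup.mp h2
    obtain ⟨z, rfl⟩ := mem_sTen_span_right hu
    set L : A ⊗[k] A →ₗ[k] A :=
      (TensorProduct.rid k A).toLinearMap ∘ₗ
        (LinearMap.lTensor A (Coalgebra.counit (R := k))) with hLdef
    have hLv : L v = 0 := by
      refine sTen_vanish (fun a _ b hb => ?_) v hv
      simp [hLdef, (hE _).mp hb.2]
    have hLy : L (Coalgebra.comul (R := k) y) = y := by
      simp [hLdef, Coalgebra.lTensor_counit_comul (R := k) y]
    have hz : z = y := by
      have := congrArg L huv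
      rw [map_add, hLv, add_zero, hLy] at this
      simpa [hLdef, Bialgebra.counit_one] using this
    rw [← huv, hz]
    abel_nf
    simpa using hv
  have hdec₂ : ∀ a ∈ M₂, Coalgebra.comul (R := k) a - (1 : A) ⊗ₜ[k] a ∈ sTen k P₂ ⊤ := by
    intro a ha
    have h2 : Coalgebra.comul (R := k) a ∈
        sTen k (Submodule.span k {(1 : A)}) ⊤ ⊔ sTen k P₂ ⊤ :=
      sTen_sup_left _ _ _ (sTen_mono hM₂split le_rfl (hA₂ a ha))
    obtain ⟨u, hu, v, hv, huv⟩ := Submodule.mem_sup.mp h2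
    obtain ⟨z, rfl⟩ := mem_sTen_span_left hu
    set L : A ⊗[k] A →ₗ[k] A :=
      (TensorProduct.lid k A).toLinearMap ∘ₗ
        (LinearMap.rTensor A (Coalgebra.counit (R := k))) with hLdef
    have hLv : L v = 0 := by
      refine sTen_vanish (fun b hb c _ => ?_) v hv
      simp [hLdef, (hE _).mp hb.2]
    have hLa : L (Coalgebra.comul (R := k) a) = a := by
      simp [hLdef, Coalgebra.rTensor_counit_comul (R := k) a]
    have hz : z = a := by
      have := congrArg L huv
      rw [map_add, hLv, add_zero, hLa] at this
      simpa [hLdef, Bialgebra.counit_one] using this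
    rw [← huv, hz]
    abel_nf
    simpa using hv
  have hεW₁ : ∀ w ∈ W₁, Coalgebra.counit (R := k) w = 0 := by
    intro w hw
    refine Submodule.mul_induction_on hw (fun x hx a ha => ?_) (fun x y hx hy => ?_)
    · rw [Bialgebra.counit_mul, (hE x).mp hx.2, zero_mul]
    · rw [map_add, hx, hy, add_zero]
  have hεW₂ : ∀ w ∈ W₂, Coalgebra.counit (R := k) w = 0 := by
    intro w hw
    refine Submodule.mul_induction_on hw (fun x hx a ha => ?_) (fun x y hx hy => ?_)
    · rw [Bialgebra.counit_mul, (hE a).mp ha.2, mul_zero]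
    · rw [map_add, hx, hy, add_zero]
  have hconv : ∀ (b b' : Dual k A) (w : A), convMul k A b b' w
      = TensorProduct.dualDistrib k A A (b ⊗ₜ[k] b') (Coalgebra.comul (R := k) w) :=
    fun _ _ _ => rfl
  have hcw₁ : W₁ ≤ Submodule.comap (Coalgebra.comul (R := k) (A := A))
      (sTen k W₁ ⊤ ⊔ sTen k ⊤ W₁) := by
    apply Submodule.mul_le.mpr
    intro x hx a ha
    rw [Submodule.mem_comap]
    have hexp : Coalgebra.comul (R := k) (x * a)
        = (x ⊗ₜ[k] (1 : A)) * Coalgebra.comul (R := k) a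
          + (Coalgebra.comul (R := k) x - x ⊗ₜ[k] (1 : A)) * Coalgebra.comul (R := k) a := by
      rw [Bialgebra.comul_mul, sub_mul]; abel
    rw [hexp]
    refine add_mem (Submodule.mem_sup_left ?_) (Submodule.mem_sup_right ?_)
    · refine sTen_mono ?_ le_top (sTen_mul _ _ _ _ (Submodule.mul_mem_mul
        (tmul_mem_sTen (Submodule.mem_span_singleton_self x)
          (Submodule.mem_span_singleton_self 1)) (hA₂ a ha)))
      refine mul_le_mul' ?_ le_rfl
      rw [Submodule.span_le, Set.singleton_subset_iff]; exact hx
    · exact sTen_mono le_top hP₁top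
        (sTen_mul _ _ _ _ (Submodule.mul_mem_mul (hdec₁ x hx.1) (hA₂ a ha)))
  have hcw₂ : W₂ ≤ Submodule.comap (Coalgebra.comul (R := k) (A := A))
      (sTen k W₂ ⊤ ⊔ sTen k ⊤ W₂) := by
    apply Submodule.mul_le.mpr
    intro x hx a ha
    rw [Submodule.mem_comap]
    have hexp : Coalgebra.comul (R := k) (x * a)
        = Coalgebra.comul (R := k) x * ((1 : A) ⊗ₜ[k] a)
          + Coalgebra.comul (R := k) x * (Coalgebra.comul (R := k) a - (1 : A) ⊗ₜ[k] a) := by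
      rw [Bialgebra.comul_mul, mul_sub]; abel
    rw [hexp]
    refine add_mem (Submodule.mem_sup_right ?_) (Submodule.mem_sup_left ?_)
    · refine sTen_mono le_top ?_ (sTen_mul _ _ _ _ (Submodule.mul_mem_mul (hA₁ x hx)
        (tmul_mem_sTen (Submodule.mem_span_singleton_self 1)
          (Submodule.mem_span_singleton_self a))))
      refine mul_le_mul' le_rfl ?_
      rw [Submodule.span_le, Set.singleton_subset_iff]; exact ha
    · exact sTen_mono htopP₂ le_top
        (sTen_mul _ _ _ _ (Submodule.mul_mem_mul (hA₁ x hx) (hdec₂ a ha.1)))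
  have hmulB₁ : ∀ b ∈ B₁, ∀ b' ∈ B₁, convMul k A b b' ∈ B₁ := by
    intro b hb b' hb'
    rw [hB₁, Submodule.mem_dualAnnihilator] at hb hb' ⊢
    intro w hw
    have hmem := hcw₁ hw
    rw [Submodule.mem_comap] at hmem
    obtain ⟨s, hs, t, ht, hst⟩ := Submodule.mem_sup.mp hmem
    have h1 : ∀ z ∈ sTen k W₁ (⊤ : Submodule k A),
        TensorProduct.dualDistrib k A A (b ⊗ₜ[k] b') z = 0 :=
      sTen_vanish fun p hp q _ => by rw [TensorProduct.dualDistrib_apply, hb p hp, zero_mul]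
    have h2 : ∀ z ∈ sTen k (⊤ : Submodule k A) W₁,
        TensorProduct.dualDistrib k A A (b ⊗ₜ[k] b') z = 0 :=
      sTen_vanish fun p _ q hq => by rw [TensorProduct.dualDistrib_apply, hb' q hq, mul_zero]
    rw [hconv, ← hst, map_add, h1 s hs, h2 t ht, add_zero]
  have hmulB₂ : ∀ b ∈ B₂, ∀ b' ∈ B₂, convMul k A b b' ∈ B₂ := by
    intro b hb b' hb'
    rw [hB₂, Submodule.mem_dualAnnihilator] at hb hb' ⊢
    intro w hw
    have hmem := hcw₂ hw
    rw [Submodule.mem_comap] at hmem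
    obtain ⟨s, hs, t, ht, hst⟩ := Submodule.mem_sup.mp hmem
    have h1 : ∀ z ∈ sTen k W₂ (⊤ : Submodule k A),
        TensorProduct.dualDistrib k A A (b ⊗ₜ[k] b') z = 0 :=
      sTen_vanish fun p hp q _ => by rw [TensorProduct.dualDistrib_apply, hb p hp, zero_mul]
    have h2 : ∀ z ∈ sTen k (⊤ : Submodule k A) W₂,
        TensorProduct.dualDistrib k A A (b ⊗ₜ[k] b') z = 0 :=
      sTen_vanish fun p _ q hq => by rw [TensorProduct.dualDistrib_apply, hb' q hq, mul_zero]
    rw [hconv, ← hst, map_add, h1 s hs, h2 t ht, add_zero]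
  -- dimension bookkeeping
  have hADual : finrank k (Dual k A) = finrank k A := Subspace.dual_finrank_eq
  have hn' : finrank k M₁ * finrank k M₂ = finrank k A := by
    rw [← finrank_tensorProduct]
    exact (LinearEquiv.ofBijective _ hiso).finrank_eq
  have he₁ : 1 + finrank k P₁ = finrank k M₁ := by
    set φ := (Coalgebra.counit (R := k) (A := A)) ∘ₗ M₁.subtype with hφdef
    have hkerφ : LinearMap.ker φ = Submodule.comap M₁.subtype P₁ := by
      rw [hφdef, LinearMap.ker_comp]
      ext x
      simp only [Submodule.mem_comap]
      exact ⟨fun h => ⟨x.2, h⟩, fun h => h.2⟩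
    have hrangeφ : LinearMap.range φ = ⊤ := by
      rw [LinearMap.range_eq_top]
      intro c
      refine ⟨c • ⟨1, h1M₁⟩, ?_⟩
      simp [hφdef, Bialgebra.counit_one]
    have h := LinearMap.finrank_range_add_finrank_ker φ
    rw [hrangeφ, hkerφ, finrank_top, Module.finrank_self,
      (Submodule.comapSubtypeEquivOfLe (inf_le_left : P₁ ≤ M₁)).finrank_eq] at h
    exact h
  have he₂ : 1 + finrank k P₂ = finrank k M₂ := by
    set φ := (Coalgebra.counit (R := k) (A := A)) ∘ₗ M₂.subtype with hφdef
    have hkerφ : LinearMap.ker φ = Submodule.comap M₂.subtype P₂ := by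
      rw [hφdef, LinearMap.ker_comp]
      ext x
      simp only [Submodule.mem_comap]
      exact ⟨fun h => ⟨x.2, h⟩, fun h => h.2⟩
    have hrangeφ : LinearMap.range φ = ⊤ := by
      rw [LinearMap.range_eq_top]
      intro c
      refine ⟨c • ⟨1, h1M₂⟩, ?_⟩
      simp [hφdef, Bialgebra.counit_one]
    have h := LinearMap.finrank_range_add_finrank_ker φ
    rw [hrangeφ, hkerφ, finrank_top, Module.finrank_self,
      (Submodule.comapSubtypeEquivOfLe (inf_le_left : P₂ ≤ M₂)).finrank_eq] at h
    exact h
  have hw₁rank : finrank k W₁ = finrank k P₁ * finrank k M₂ := by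
    have hcomp : (LinearMap.mul' k A) ∘ₗ (TensorProduct.map P₁.subtype M₂.subtype)
        = ((LinearMap.mul' k A) ∘ₗ (TensorProduct.map M₁.subtype M₂.subtype)) ∘ₗ
          (TensorProduct.map (Submodule.inclusion (inf_le_left : P₁ ≤ M₁)) LinearMap.id) := by
      rw [LinearMap.comp_assoc, ← TensorProduct.map_comp]
      rfl
    have hinj : Function.Injective
        ((LinearMap.mul' k A) ∘ₗ (TensorProduct.map P₁.subtype M₂.subtype)) := by
      rw [hcomp]
      exact hiso.1.comp (tmap_inj (Submodule.inclusion_injective _) fun a b h => h)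
    have h1 : W₁ = LinearMap.range
        ((LinearMap.mul' k A) ∘ₗ (TensorProduct.map P₁.subtype M₂.subtype)) :=
      mul_eq_mulRange P₁ M₂
    rw [h1, LinearMap.finrank_range_of_inj hinj, finrank_tensorProduct]
  have hw₂rank : finrank k W₂ = finrank k M₁ * finrank k P₂ := by
    have hcomp : (LinearMap.mul' k A) ∘ₗ (TensorProduct.map M₁.subtype P₂.subtype)
        = ((LinearMap.mul' k A) ∘ₗ (TensorProduct.map M₁.subtype M₂.subtype)) ∘ₗ
          (TensorProduct.map LinearMap.id (Submodule.inclusion (inf_le_left : P₂ ≤ M₂))) := by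
      rw [LinearMap.comp_assoc, ← TensorProduct.map_comp]
      rfl
    have hinj : Function.Injective
        ((LinearMap.mul' k A) ∘ₗ (TensorProduct.map M₁.subtype P₂.subtype)) := by
      rw [hcomp]
      exact hiso.1.comp (tmap_inj (fun a b h => h) (Submodule.inclusion_injective _))
    have h1 : W₂ = LinearMap.range
        ((LinearMap.mul' k A) ∘ₗ (TensorProduct.map M₁.subtype P₂.subtype)) :=
      mul_eq_mulRange M₁ P₂
    rw [h1, LinearMap.finrank_range_of_inj hinj, finrank_tensorProduct]
  have hB₁rank : finrank k B₁ + finrank k W₁ = finrank k A := by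
    rw [hB₁]; exact finrank_dualAnnihilator_add W₁
  have hB₂rank : finrank k B₂ + finrank k W₂ = finrank k A := by
    rw [hB₂]; exact finrank_dualAnnihilator_add W₂
  have hfB₁ : finrank k B₁ = finrank k M₂ := by
    have key : finrank k M₂ + finrank k P₁ * finrank k M₂ = finrank k A := by
      rw [← hn', ← he₁, add_mul, one_mul]
    have h := hB₁rank
    rw [hw₁rank] at h
    exact Nat.add_right_cancel (h.trans key.symm)
  have hfB₂ : finrank k B₂ = finrank k M₁ := by
    have key : finrank k M₁ + finrank k M₁ * finrank k P₂ = finrank k A := by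
      rw [← hn', ← he₂, mul_add, mul_one]
    have h := hB₂rank
    rw [hw₂rank] at h
    exact Nat.add_right_cancel (h.trans key.symm)
  -- pairing of sTen's in the dual
  have hdd : ∀ (p q : Submodule k (Dual k A)) (r s : Submodule k A),
      (∀ f ∈ p, ∀ g ∈ q, ∀ a ∈ r, ∀ b ∈ s, f a * g b = 0) →
      ∀ x ∈ sTen k p q, ∀ z ∈ sTen k r s, TensorProduct.dualDistrib k A A x z = 0 := by
    intro p q r s h x hx z hz
    have hout := sTen_vanish
      (F := (LinearMap.applyₗ (R := k) z) ∘ₗ TensorProduct.dualDistrib k A A)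
      (fun f hf g hg => sTen_vanish (F := TensorProduct.dualDistrib k A A (f ⊗ₜ[k] g))
        (fun a ha b hb => by
          rw [TensorProduct.dualDistrib_apply]; exact h f hf g hg a ha b hb) z hz) x hx
    exact hout
  have himg₁ : Submodule.map (TensorProduct.dualDistrib k A A) (sTen k ⊤ B₁)
      = (sTen k (⊤ : Submodule k A) W₁).dualAnnihilator := by
    refine Submodule.eq_of_le_of_finrank_eq ?_ ?_
    · rintro _ ⟨x, hx, rfl⟩
      rw [Submodule.mem_dualAnnihilator]
      intro z hz
      refine hdd ⊤ B₁ ⊤ W₁ (fun f _ g hg a _ b hb => ?_) x hx z hz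
      rw [hB₁, Submodule.mem_dualAnnihilator] at hg
      rw [hg b hb, mul_zero]
    · have hL : finrank k (Submodule.map (TensorProduct.dualDistrib k A A) (sTen k ⊤ B₁))
          = finrank k A * finrank k B₁ := by
        rw [← (Submodule.equivMapOfInjective _ (dualDistrib_inj (k := k) (M := A) (N := A)) _).finrank_eq, finrank_sTen, finrank_top, hADual]
      have hR : finrank k ((sTen k (⊤ : Submodule k A) W₁).dualAnnihilator)
          + finrank k A * finrank k W₁ = finrank k A * finrank k A := by
        have h := finrank_dualAnnihilator_add (sTen k (⊤ : Submodule k A) W₁)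
        rw [finrank_sTen, finrank_top, finrank_tensorProduct] at h
        exact h
      have hsum : finrank k A * finrank k B₁ + finrank k A * finrank k W₁
          = finrank k A * finrank k A := by
        rw [← Nat.left_distrib, hB₁rank]
      rw [hL]
      exact Nat.add_right_cancel (hsum.trans hR.symm)
  have himg₂ : Submodule.map (TensorProduct.dualDistrib k A A) (sTen k B₂ ⊤)
      = (sTen k W₂ (⊤ : Submodule k A)).dualAnnihilator := by
    refine Submodule.eq_of_le_of_finrank_eq ?_ ?_
    · rintro _ ⟨x, hx, rfl⟩
      rw [Submodule.mem_dualAnnihilator]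
      intro z hz
      refine hdd B₂ ⊤ W₂ ⊤ (fun f hf g _ a ha b _ => ?_) x hx z hz
      rw [hB₂, Submodule.mem_dualAnnihilator] at hf
      rw [hf a ha, zero_mul]
    · have hL : finrank k (Submodule.map (TensorProduct.dualDistrib k A A) (sTen k B₂ ⊤))
          = finrank k B₂ * finrank k A := by
        rw [← (Submodule.equivMapOfInjective _ (dualDistrib_inj (k := k) (M := A) (N := A)) _).finrank_eq, finrank_sTen, finrank_top, hADual]
      have hR : finrank k ((sTen k W₂ (⊤ : Submodule k A)).dualAnnihilator)
          + finrank k W₂ * finrank k A = finrank k A * finrank k A := by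
        have h := finrank_dualAnnihilator_add (sTen k W₂ (⊤ : Submodule k A))
        rw [finrank_sTen, finrank_top, finrank_tensorProduct] at h
        exact h
      have hsum : finrank k B₂ * finrank k A + finrank k W₂ * finrank k A
          = finrank k A * finrank k A := by
        rw [← Nat.right_distrib, hB₂rank]
      rw [hL]
      exact Nat.add_right_cancel (hsum.trans hR.symm)
  have hco₁ : ∀ b ∈ B₁,
      b.comp ((LinearMap.mul' k A).comp (TensorProduct.comm k A A).toLinearMap) ∈
        Submodule.map (TensorProduct.dualDistrib k A A) (sTen k ⊤ B₁) := by
    intro b hb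
    rw [himg₁, Submodule.mem_dualAnnihilator]
    intro z hz
    refine sTen_vanish (fun a _ w hw => ?_) z hz
    have hwa : w * a ∈ W₁ := hW₁r (Submodule.mul_mem_mul hw Submodule.mem_top)
    rw [hB₁, Submodule.mem_dualAnnihilator] at hb
    simpa [LinearMap.mul'_apply] using hb _ hwa
  have hco₂ : ∀ b ∈ B₂,
      b.comp ((LinearMap.mul' k A).comp (TensorProduct.comm k A A).toLinearMap) ∈
        Submodule.map (TensorProduct.dualDistrib k A A) (sTen k B₂ ⊤) := by
    intro b hb
    rw [himg₂, Submodule.mem_dualAnnihilator]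
    intro z hz
    refine sTen_vanish (fun w hw a _ => ?_) z hz
    have hwa : a * w ∈ W₂ := hW₂l (Submodule.mul_mem_mul Submodule.mem_top hw)
    rw [hB₂, Submodule.mem_dualAnnihilator] at hb
    simpa [LinearMap.mul'_apply] using hb _ hwa
  have htopsplit₂ : (⊤ : Submodule k A) ≤ M₂ ⊔ W₁ := by
    rw [← htop]
    calc M₁ * M₂ ≤ (Submodule.span k {(1 : A)} ⊔ P₁) * M₂ :=
          mul_le_mul' hM₁split le_rfl
      _ = Submodule.span k {(1 : A)} * M₂ ⊔ P₁ * M₂ := Submodule.sup_mul _ _ _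
      _ ≤ M₂ ⊔ W₁ := sup_le_sup (le_of_eq honeM₂) le_rfl
  have htopsplit₁ : (⊤ : Submodule k A) ≤ M₁ ⊔ W₂ := by
    rw [← htop]
    calc M₁ * M₂ ≤ M₁ * (Submodule.span k {(1 : A)} ⊔ P₂) :=
          mul_le_mul' le_rfl hM₂split
      _ = M₁ * Submodule.span k {(1 : A)} ⊔ M₁ * P₂ := Submodule.mul_sup _ _ _
      _ ≤ M₁ ⊔ W₂ := sup_le_sup (le_of_eq hM₁one) le_rfl
  have hstep : sTen k M₁ M₂ ≤ LinearMap.range (Coalgebra.comul (R := k) (A := A))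
      ⊔ (sTen k W₂ ⊤ ⊔ sTen k ⊤ W₁) := by
    rw [sTen_eq_span, Submodule.span_le]
    rintro _ ⟨y, hy, a, ha, rfl⟩
    have hu := hdec₁ y hy
    have hv := hdec₂ a ha
    have hexp : (y ⊗ₜ[k] a : A ⊗[k] A) = Coalgebra.comul (R := k) (y * a)
        - ((y ⊗ₜ[k] (1 : A)) * (Coalgebra.comul (R := k) a - (1 : A) ⊗ₜ[k] a)
          + (Coalgebra.comul (R := k) y - y ⊗ₜ[k] (1 : A)) * Coalgebra.comul (R := k) a) := by
      have h1 : (y ⊗ₜ[k] (1 : A)) * ((1 : A) ⊗ₜ[k] a) = y ⊗ₜ[k] a := by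
        rw [Algebra.TensorProduct.tmul_mul_tmul, mul_one, one_mul]
      rw [Bialgebra.comul_mul, sub_mul, mul_sub, h1]
      abel
    rw [hexp]
    refine sub_mem (Submodule.mem_sup_left ⟨y * a, rfl⟩) (Submodule.mem_sup_right ?_)
    refine add_mem (Submodule.mem_sup_left ?_) (Submodule.mem_sup_right ?_)
    · refine sTen_mono ?_ le_top (sTen_mul _ _ _ _ (Submodule.mul_mem_mul
        (tmul_mem_sTen (Submodule.mem_span_singleton_self y)
          (Submodule.mem_span_singleton_self 1)) hv))
      refine mul_le_mul' ?_ le_rfl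
      rw [Submodule.span_le, Set.singleton_subset_iff]; exact hy
    · exact sTen_mono le_top hP₁top (sTen_mul _ _ _ _ (Submodule.mul_mem_mul hu (hA₂ a ha)))
  have hspan : (⊤ : Submodule k (A ⊗[k] A)) ≤
      LinearMap.range (Coalgebra.comul (R := k) (A := A))
        ⊔ (sTen k W₂ ⊤ ⊔ sTen k ⊤ W₁) := by
    have h0 : (⊤ : Submodule k (A ⊗[k] A)) = sTen k (⊤ : Submodule k A) ⊤ := sTen_top_top.symm
    rw [h0]
    refine le_trans (sTen_mono htopsplit₁ htopsplit₂) ?_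
    refine le_trans (sTen_sup_left _ _ _) (sup_le ?_ ?_)
    · refine le_trans (sTen_sup_right _ _ _) (sup_le hstep ?_)
      exact le_trans (sTen_mono le_top le_rfl) (le_sup_of_le_right le_sup_right)
    · exact le_sup_of_le_right (le_sup_of_le_left (sTen_mono le_rfl le_top))
  refine ⟨⟨⟨?_, hmulB₁⟩, ?_, hmulB₂⟩, hco₁, hco₂, ?_⟩
  · rw [hB₁, Submodule.mem_dualAnnihilator]; exact hεW₁
  · rw [hB₂, Submodule.mem_dualAnnihilator]; exact hεW₂
  · set Θ := ((Coalgebra.comul (R := k) (A := A)).dualMap.comp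
        (TensorProduct.dualDistrib k A A)).comp (TensorProduct.map B₂.subtype B₁.subtype)
      with hΘdef
    have h0 : ∀ t, Θ t = 0 → t = 0 := by
      intro t ht
      set t' := TensorProduct.map B₂.subtype B₁.subtype t with ht'def
      have ht'mem : t' ∈ sTen k B₂ B₁ := ⟨t, rfl⟩
      have hv₂ : ∀ z ∈ sTen k W₂ (⊤ : Submodule k A),
          TensorProduct.dualDistrib k A A t' z = 0 := by
        intro z hz
        refine hdd B₂ B₁ W₂ ⊤ (fun f hf g _ a ha b _ => ?_) t' ht'mem z hz
        rw [hB₂, Submodule.mem_dualAnnihilator] at hf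
        rw [hf a ha, zero_mul]
      have hv₁ : ∀ z ∈ sTen k (⊤ : Submodule k A) W₁,
          TensorProduct.dualDistrib k A A t' z = 0 := by
        intro z hz
        refine hdd B₂ B₁ ⊤ W₁ (fun f _ g hg a _ b hb => ?_) t' ht'mem z hz
        rw [hB₁, Submodule.mem_dualAnnihilator] at hg
        rw [hg b hb, mul_zero]
      have hvΔ : ∀ a : A,
          TensorProduct.dualDistrib k A A t' (Coalgebra.comul (R := k) a) = 0 := by
        intro a
        exact DFunLike.congr_fun ht a
      have hzero : TensorProduct.dualDistrib k A A t' = 0 := by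
        apply LinearMap.ext
        intro z
        obtain ⟨z₁, hz₁, z₂, hz₂, hz⟩ := Submodule.mem_sup.mp (hspan (Submodule.mem_top (x := z)))
        obtain ⟨z₃, hz₃, z₄, hz₄, hz'⟩ := Submodule.mem_sup.mp hz₂
        obtain ⟨a, rfl⟩ := hz₁
        simp only [LinearMap.zero_apply]
        rw [← hz, ← hz', map_add, map_add, hvΔ a, hv₂ z₃ hz₃, hv₁ z₄ hz₄]
        simp
      have ht'0 : t' = 0 := dualDistrib_inj (k := k) (M := A) (N := A)
        (by rw [hzero, map_zero])
      exact tmap_inj (k := k) (M := B₂) (N := B₁) (P := Dual k A) (Q := Dual k A) B₂.injective_subtype B₁.injective_subtype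
        (show TensorProduct.map B₂.subtype B₁.subtype t
          = TensorProduct.map B₂.subtype B₁.subtype 0 by rw [map_zero]; exact ht'0)
    have hgoal : finrank k ↥B₂ * finrank k ↥B₁ = finrank k (Dual k A) := by
      rw [hfB₂, hfB₁, hADual]; exact hn'
    exact bij_of_inj_rank (M := B₂) (N := B₁) (W := Dual k A) Θ h0 (by exact hgoal)
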